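/- arXiv:1811.11143 — 7 statements merged into one kernel-verified Lean document; each statement's English description precedes it below -/
import Mathlib

section
/- Let (W,d) be a closed Hilbert complex with Poincaré inequality: there exists c_P > 0 such that ‖v‖ ≤ c_P ‖d^k v‖ for all v in the orthogonal complement of ker(d^k) within the domain of d^k. Then the dual complex satisfies the same Poincaré inequality with the same constant: for all v in the orthogonal complement of ker(d*_{k+1}) within the domain of d*_{k+1}, one has ‖v‖ ≤ c_P ‖d*_{k+1} v‖. -/
/-!
Since `range d` is closed, `(ker d*)ᗮ = (range d)ᗮᗮ = range d`, so every such `v` is `d u` with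
`u ⊥ ker d`. Then `‖v‖² = re ⟪u, d* v⟫ ≤ ‖u‖ ‖d* v‖ ≤ c_P ‖v‖ ‖d* v‖`, and dividing by `‖v‖`
gives the dual inequality.
-/

namespace ContinuousLinearMap

variable {𝕜 E F : Type*} [RCLike 𝕜]
  [NormedAddCommGroup E] [InnerProductSpace 𝕜 E] [CompleteSpace E]
  [NormedAddCommGroup F] [InnerProductSpace 𝕜 F]

theorem exists_mem_orthogonal_ker_apply_eq (T : E →L[𝕜] F) {v : F} (hv : v ∈ T.range) :
    ∃ u ∈ T.kerᗮ, T u = v := by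
  obtain ⟨w, rfl⟩ := hv
  obtain ⟨w₀, hw₀, u, hu, rfl⟩ := T.ker.exists_add_mem_mem_orthogonal w
  have hTw₀ : T w₀ = 0 := hw₀
  exact ⟨u, hu, by simp [hTw₀]⟩

variable [CompleteSpace F]

theorem orthogonal_ker_adjoint_of_isClosed_range (T : E →L[𝕜] F)
    (hT : IsClosed (T.range : Set F)) : (adjoint T).kerᗮ = T.range := by
  rw [← T.orthogonal_range, Submodule.orthogonal_orthogonal_eq_closure,
    hT.submodule_topologicalClosure_eq]

theorem norm_le_mul_norm_adjoint_apply_of_mem_range (T : E →L[𝕜] F) {c : ℝ}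
    (hT : ∀ u ∈ T.kerᗮ, ‖u‖ ≤ c * ‖T u‖) {v : F} (hv : v ∈ T.range) :
    ‖v‖ ≤ c * ‖adjoint T v‖ := by
  obtain ⟨u, hu, hTu⟩ := T.exists_mem_orthogonal_ker_apply_eq hv
  have hsq : ‖v‖ * ‖v‖ ≤ c * ‖adjoint T v‖ * ‖v‖ :=
    calc ‖v‖ * ‖v‖ = RCLike.re (inner 𝕜 u (adjoint T v)) := by
          rw [adjoint_inner_right, hTu, inner_self_eq_norm_mul_norm]
      _ ≤ ‖inner 𝕜 u (adjoint T v)‖ := RCLike.re_le_norm _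
      _ ≤ ‖u‖ * ‖adjoint T v‖ := norm_inner_le_norm _ _
      _ ≤ c * ‖T u‖ * ‖adjoint T v‖ := by gcongr; exact hT u hu
      _ = c * ‖adjoint T v‖ * ‖v‖ := by rw [hTu]; ring
  rcases eq_or_ne v 0 with rfl | hv₀
  · simp
  · exact le_of_mul_le_mul_right hsq (norm_pos_iff.mpr hv₀)

end ContinuousLinearMap

theorem dual_poincare_general {W W' : Type*}
    [NormedAddCommGroup W] [InnerProductSpace ℝ W] [CompleteSpace W]
    [NormedAddCommGroup W'] [InnerProductSpace ℝ W'] [CompleteSpace W']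
    (d : W →L[ℝ] W') (cP : ℝ)
    (hclosed : IsClosed (LinearMap.range (d : W →ₗ[ℝ] W') : Set W'))
    (hPoincare : ∀ v ∈ (LinearMap.ker (d : W →ₗ[ℝ] W'))ᗮ, ‖v‖ ≤ cP * ‖d v‖) :
    ∀ v ∈ (LinearMap.ker (ContinuousLinearMap.adjoint d : W' →ₗ[ℝ] W))ᗮ,
      ‖v‖ ≤ cP * ‖ContinuousLinearMap.adjoint d v‖ := by
  intro v hv
  rw [d.orthogonal_ker_adjoint_of_isClosed_range hclosed] at hv
  exact d.norm_le_mul_norm_adjoint_apply_of_mem_range hPoincare hv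

/-- Poincaré inequality for a closed Hilbert complex transfers to the dual complex
with the same constant. -/
theorem dual_poincare {W W' : Type*}
    [NormedAddCommGroup W] [InnerProductSpace ℝ W] [CompleteSpace W]
    [NormedAddCommGroup W'] [InnerProductSpace ℝ W'] [CompleteSpace W']
    (d : W →L[ℝ] W') (cP : ℝ) (hcP : 0 < cP)
    (hclosed : IsClosed (LinearMap.range (d : W →ₗ[ℝ] W') : Set W'))
    (hPoincare : ∀ v ∈ (LinearMap.ker (d : W →ₗ[ℝ] W'))ᗮ, ‖v‖ ≤ cP * ‖d v‖) :
    ∀ v ∈ (LinearMap.ker (ContinuousLinearMap.adjoint d : W' →ₗ[ℝ] W))ᗮ,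
      ‖v‖ ≤ cP * ‖ContinuousLinearMap.adjoint d v‖ :=
  dual_poincare_general d cP hclosed hPoincare
end

section
/- Let P be a bounded linear projection (P² = P) on a normed space V with P ≠ 0 and P ≠ id. Then the operator norms satisfy ‖id − P‖ = ‖P‖. -/
open scoped RealInnerProductSpace

lemma idem_one_le_norm {H : Type*} [NormedAddCommGroup H] [InnerProductSpace ℝ H]
    (Q : H →L[ℝ] H) (hQ : Q.comp Q = Q) (h0 : Q ≠ 0) : 1 ≤ ‖Q‖ := by
  obtain ⟨y, hy⟩ : ∃ y, Q y ≠ 0 := by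
    by_contra h
    push_neg at h
    exact h0 (ContinuousLinearMap.ext fun y => by simpa using h y)
  have h1 : Q (Q y) = Q y := by
    have := ContinuousLinearMap.ext_iff.mp hQ y
    simpa using this
  have h2 := Q.le_opNorm (Q y)
  rw [h1] at h2
  have h3 : 0 < ‖Q y‖ := norm_pos_iff.mpr hy
  nlinarith

set_option maxHeartbeats 2000000 in
lemma key_proj_norm {H : Type*} [NormedAddCommGroup H] [InnerProductSpace ℝ H]
    (P : H →L[ℝ] H) (hproj : P.comp P = P)
    (hQne : ContinuousLinearMap.id ℝ H - P ≠ 0) (x : H) :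
    ‖P x‖ ≤ ‖ContinuousLinearMap.id ℝ H - P‖ * ‖x‖ := by
  set Q := ContinuousLinearMap.id ℝ H - P with hQdef
  have hQapp : ∀ y, Q y = y - P y := fun y => by simp [hQdef]
  set u := P x with hu
  have hPu : P u = u := by
    have := ContinuousLinearMap.ext_iff.mp hproj x
    simpa using this
  have hQu : Q u = 0 := by rw [hQapp, hPu, sub_self]
  have hQx : Q x = x - u := hQapp x
  have hQnorm : (0:ℝ) ≤ ‖Q‖ := norm_nonneg _
  have hQproj : Q.comp Q = Q := by
    ext y
    have hy := ContinuousLinearMap.ext_iff.mp hproj y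
    simp only [ContinuousLinearMap.comp_apply] at hy ⊢
    rw [hQapp, hQapp, map_sub, hy]
    abel
  by_cases hu0 : u = 0
  · rw [hu0]
    simp only [norm_zero]
    positivity
  have hun : 0 < ‖u‖ := norm_pos_iff.mpr hu0
  have hxu2 : ‖x - u‖^2 = ‖x‖^2 - 2*⟪x, u⟫ + ‖u‖^2 := norm_sub_sq_real x u
  have hQxle : ‖x - u‖ ≤ ‖Q‖ * ‖x‖ := by
    have := Q.le_opNorm x
    rwa [hQx] at this
  by_cases hc : ⟪x, u⟫ = 0
  · -- orthogonal case
    have h1 : ‖x - u‖^2 = ‖x‖^2 + ‖u‖^2 := by rw [hxu2, hc]; ring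
    nlinarith [norm_nonneg (x - u), norm_nonneg x, mul_nonneg hQnorm (norm_nonneg x)]
  · set c := ⟪x, u⟫ with hcdef
    set s := ‖u‖^2 / c with hsdef
    have hsc : s * c = ‖u‖^2 := by rw [hsdef]; field_simp
    set z := u - s • x with hz
    have hQz : Q z = -(s • (x - u)) := by
      rw [hz, map_sub, hQu, map_smul, hQx]
      simp
    have hzn : ‖Q z‖ = |s| * ‖x - u‖ := by
      rw [hQz, norm_neg, norm_smul, Real.norm_eq_abs]
    have hz2 : ‖z‖^2 = s^2*‖x‖^2 - ‖u‖^2 := by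
      have := norm_sub_sq_real u (s • x)
      rw [real_inner_smul_right, real_inner_comm, ← hcdef, norm_smul,
        Real.norm_eq_abs] at this
      rw [hz, this]
      have : |s|^2 = s^2 := sq_abs s
      nlinarith [hsc]
    by_cases hz0 : z = 0
    · -- z = 0 ⟹ u = x
      have h' : u - s • x = 0 := by rw [← hz]; exact hz0
      have hux : u = s • x := sub_eq_zero.mp h'
      have hsu : u = s • u := by
        calc u = P u := hPu.symm
        _ = P (s • x) := by rw [← hux]
        _ = s • P x := map_smul P s x
        _ = s • u := by rw [← hu]
      have h1s : (1 - s) • u = 0 := by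
        rw [sub_smul, one_smul, ← hsu, sub_self]
      have hs1 : s = 1 := by
        rcases smul_eq_zero.mp h1s with h | h
        · linarith [h]
        · exact absurd h hu0
      have hxeq : u = x := by rw [hux, hs1, one_smul]
      have hQ1 : 1 ≤ ‖Q‖ := idem_one_le_norm Q hQproj hQne
      rw [hxeq]
      nlinarith [norm_nonneg x]
    · have hzpos : 0 < ‖z‖ := norm_pos_iff.mpr hz0
      have hineq : ‖Q z‖ ≤ ‖Q‖ * ‖z‖ := Q.le_opNorm z
      rw [hzn] at hineq
      have habs : 0 ≤ |s| * ‖x - u‖ := mul_nonneg (abs_nonneg s) (norm_nonneg _)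
      have hsq := mul_self_le_mul_self habs hineq
      clear_value Q u z c s
      clear hQapp hPu hQu hQx hQproj hQz hzn hz hQdef hu hz0 hu0 hineq hQne hQxle hproj hcdef hsdef hc
      have h1 : s^2 * ‖x - u‖^2 ≤ ‖Q‖^2 * ‖z‖^2 := by
        nlinarith [sq_abs s]
      have hid : s^2*‖x‖^2*(‖x‖^2 - 2*c + ‖u‖^2) - ‖u‖^2*(s^2*‖x‖^2 - ‖u‖^2)
          = s^2*(‖x‖^2 - c)^2 := by
        linear_combination (-(‖u‖^2) - s*c) * hsc
      have h2 : ‖u‖^2 * ‖z‖^2 ≤ s^2*‖x‖^2*‖x - u‖^2 := by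
        rw [hz2, hxu2]
        linarith [hid, mul_nonneg (sq_nonneg s) (sq_nonneg (‖x‖^2 - c))]
      have h3 : ‖u‖^2 * ‖z‖^2 ≤ (‖Q‖*‖x‖)^2 * ‖z‖^2 := by
        have := mul_le_mul_of_nonneg_left h1 (sq_nonneg ‖x‖)
        nlinarith [this, h2]
      have h4 : ‖u‖^2 ≤ (‖Q‖*‖x‖)^2 := by
        have hz2pos : 0 < ‖z‖^2 := by positivity
        exact le_of_mul_le_mul_right (by linarith) hz2pos
      nlinarith [mul_nonneg hQnorm (norm_nonneg x), norm_nonneg u]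

/-- Xu–Zikatanov identity: for a nontrivial bounded projection `P` on a Hilbert
space, `‖id - P‖ = ‖P‖`. -/
theorem norm_id_sub_proj {H : Type*}
    [NormedAddCommGroup H] [InnerProductSpace ℝ H] [CompleteSpace H]
    (P : H →L[ℝ] H) (hproj : P.comp P = P)
    (h0 : P ≠ 0) (h1 : P ≠ ContinuousLinearMap.id ℝ H) :
    ‖ContinuousLinearMap.id ℝ H - P‖ = ‖P‖ := by
  set Q := ContinuousLinearMap.id ℝ H - P with hQdef
  have hQne : Q ≠ 0 := by
    rw [hQdef, sub_ne_zero]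
    exact fun h => h1 h.symm
  have hQproj : Q.comp Q = Q := by
    ext y
    have hy := ContinuousLinearMap.ext_iff.mp hproj y
    simp only [ContinuousLinearMap.comp_apply] at hy ⊢
    simp only [hQdef, ContinuousLinearMap.sub_apply, ContinuousLinearMap.id_apply,
      map_sub, hy]
    abel
  have hP_eq : ContinuousLinearMap.id ℝ H - Q = P := by rw [hQdef]; abel
  have hle1 : ‖P‖ ≤ ‖Q‖ :=
    P.opNorm_le_bound (norm_nonneg Q) (key_proj_norm P hproj hQne)
  have hle2 : ‖Q‖ ≤ ‖P‖ := by
    apply Q.opNorm_le_bound (norm_nonneg P)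
    intro x
    have := key_proj_norm Q hQproj (by rw [hP_eq]; exact h0) x
    rwa [hP_eq] at this
  exact le_antisymm hle2 hle1
end

section
/- Let H be a Hilbert space and M, N closed subspaces with orthogonal projections P_M, P_N. Suppose that for every q ∈ N, ‖q − P_M q‖ ≤ ‖(id − π) P_M q‖ for some bounded linear operator π : H → H satisfying ‖id − π‖ ≤ C. Then for every unit vector q ∈ N, one has ‖q − P_M q‖ ≤ (1 − 1/(C+1)²)^{1/2}, i.e., the one-sided gap δ(N, M) = sup_{q∈N, ‖q‖=1} ‖q − P_M q‖ is at most (1 − 1/(C+1)²)^{1/2}. -/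
/-!
Write `p` for the projection of a unit vector `q ∈ N` onto `M`. The hypothesis gives
`‖q - p‖ ≤ C ‖p‖`, so the triangle inequality yields `1 = ‖q‖ ≤ (C + 1) ‖p‖`, and
Pythagoras, `‖q - p‖² = 1 - ‖p‖²`, turns this lower bound on `‖p‖` into the upper bound
on `‖q - p‖`.
-/

theorem norm_le_add_one_mul_of_norm_sub_le {E : Type*} [SeminormedAddCommGroup E] {x y : E}
    {C : ℝ} (h : ‖x - y‖ ≤ C * ‖y‖) : ‖x‖ ≤ (C + 1) * ‖y‖ :=
  calc ‖x‖ ≤ ‖x - y‖ + ‖y‖ := norm_le_norm_sub_add x y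
    _ ≤ (C + 1) * ‖y‖ := by linarith

namespace Submodule

variable {𝕜 E : Type*} [RCLike 𝕜] [NormedAddCommGroup E] [InnerProductSpace 𝕜 E]
  (K : Submodule 𝕜 E) [K.HasOrthogonalProjection]

theorem norm_sub_starProjection_sq (v : E) :
    ‖v - K.starProjection v‖ ^ 2 = ‖v‖ ^ 2 - ‖K.starProjection v‖ ^ 2 := by
  rw [K.norm_sq_eq_add_norm_sq_starProjection v, starProjection_orthogonal_val]
  ring

theorem norm_sub_starProjection_le_sqrt_mul {C : ℝ} (hC : 0 ≤ C) {v : E}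
    (hv : ‖v - K.starProjection v‖ ≤ C * ‖K.starProjection v‖) :
    ‖v - K.starProjection v‖ ≤ √(1 - 1 / (C + 1) ^ 2) * ‖v‖ := by
  have hC1 : 0 < (C + 1) ^ 2 := by positivity
  have hproj : ‖v‖ ^ 2 / (C + 1) ^ 2 ≤ ‖K.starProjection v‖ ^ 2 := by
    rw [div_le_iff₀ hC1, ← mul_pow]
    exact pow_le_pow_left₀ (norm_nonneg v)
      ((norm_le_add_one_mul_of_norm_sub_le hv).trans_eq (mul_comm _ _)) 2
  have hsq : ‖v - K.starProjection v‖ ^ 2 ≤ (1 - 1 / (C + 1) ^ 2) * ‖v‖ ^ 2 := by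
    rw [K.norm_sub_starProjection_sq, sub_mul, one_mul, one_div_mul_eq_div]
    linarith
  calc ‖v - K.starProjection v‖ ≤ √((1 - 1 / (C + 1) ^ 2) * ‖v‖ ^ 2) :=
        Real.le_sqrt_of_sq_le hsq
    _ = √(1 - 1 / (C + 1) ^ 2) * ‖v‖ := by
      rw [Real.sqrt_mul' _ (sq_nonneg _), Real.sqrt_sq (norm_nonneg v)]

end Submodule

theorem gap_bound_general {H : Type*} [NormedAddCommGroup H] [InnerProductSpace ℝ H]
    (M N : Submodule ℝ H) [CompleteSpace ↥M]
    (π : H →L[ℝ] H) (C : ℝ)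
    (hπ : ‖ContinuousLinearMap.id ℝ H - π‖ ≤ C)
    (hyp : ∀ q ∈ N, ‖q - (M.orthogonalProjectionOnto q : H)‖ ≤
      ‖(ContinuousLinearMap.id ℝ H - π) ((M.orthogonalProjectionOnto q : H))‖) :
    ∀ q ∈ N, ‖q‖ = 1 →
      ‖q - (M.orthogonalProjectionOnto q : H)‖ ≤ Real.sqrt (1 - 1 / (C + 1) ^ 2) := by
  intro q hq hq1
  have hC : 0 ≤ C := (norm_nonneg _).trans hπ
  have hqC : ‖q - M.starProjection q‖ ≤ C * ‖M.starProjection q‖ :=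
    calc ‖q - M.starProjection q‖
        ≤ ‖(ContinuousLinearMap.id ℝ H - π) (M.starProjection q)‖ := hyp q hq
      _ ≤ ‖ContinuousLinearMap.id ℝ H - π‖ * ‖M.starProjection q‖ :=
        ContinuousLinearMap.le_opNorm _ _
      _ ≤ C * ‖M.starProjection q‖ := by gcongr
  simpa [hq1] using M.norm_sub_starProjection_le_sqrt_mul hC hqC

/-- Gap estimate: if for every `q ∈ N` one has
`‖q - P_M q‖ ≤ ‖(id - π) (P_M q)‖` with `‖id - π‖ ≤ C`, then the one-sided gap
`δ(N,M)` is at most `√(1 - 1/(C+1)²)`. -/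
theorem gap_bound {H : Type*} [NormedAddCommGroup H] [InnerProductSpace ℝ H]
    (M N : Submodule ℝ H) [CompleteSpace ↥M]
    (π : H →L[ℝ] H) (C : ℝ) (hC : 0 ≤ C)
    (hπ : ‖ContinuousLinearMap.id ℝ H - π‖ ≤ C)
    (hyp : ∀ q ∈ N, ‖q - (M.orthogonalProjectionOnto q : H)‖ ≤
      ‖(ContinuousLinearMap.id ℝ H - π) ((M.orthogonalProjectionOnto q : H))‖) :
    ∀ q ∈ N, ‖q‖ = 1 →
      ‖q - (M.orthogonalProjectionOnto q : H)‖ ≤ Real.sqrt (1 - 1 / (C + 1) ^ 2) :=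
  gap_bound_general M N π C hπ hyp
end

section
/- Let H be a Hilbert space, let σ, σ_ℓ, σ_{ℓ+1} ∈ H, and write e_{ℓ} = ‖σ − σ_ℓ‖², e_{ℓ+1} = ‖σ − σ_{ℓ+1}‖², Δ = ‖σ_ℓ − σ_{ℓ+1}‖². Suppose there exist C_qo > 0 and Δ_d ≥ 0 such that ⟨σ − σ_{ℓ+1}, σ_ℓ − σ_{ℓ+1}⟩ ≤ ‖σ − σ_{ℓ+1}‖ · (C_qo Δ_d)^{1/2}. Then for every ε ∈ (0,1): e_{ℓ+1} ≤ (1/(1−ε))·e_ℓ − (1/(1−ε))·Δ + (ε^{-1}/(1−ε))·C_qo·Δ_d, and in particular e_{ℓ+1} ≤ (1/(1−ε)) e_ℓ − Δ + (ε^{-1}/(1−ε)) C_qo Δ_d. -/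
open scoped RealInnerProductSpace

/-- Quasi-orthogonality inequality (4.2a): from the bound on the cross term,
for every `ε ∈ (0,1)`,
`e_{ℓ+1} ≤ (1/(1-ε)) e_ℓ - (1/(1-ε)) Δ + (ε⁻¹/(1-ε)) C_qo Δ_d`, and in
particular `e_{ℓ+1} ≤ (1/(1-ε)) e_ℓ - Δ + (ε⁻¹/(1-ε)) C_qo Δ_d`. -/
theorem quasi_orthogonality {H : Type*}
    [NormedAddCommGroup H] [InnerProductSpace ℝ H]
    (σ σl σl1 : H) (Cqo Δd : ℝ) (hC : 0 < Cqo) (hΔd : 0 ≤ Δd)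
    (hcross : ⟪σ - σl1, σl - σl1⟫ ≤ ‖σ - σl1‖ * Real.sqrt (Cqo * Δd)) :
    ∀ ε : ℝ, 0 < ε → ε < 1 →
      (‖σ - σl1‖ ^ 2 ≤ (1 / (1 - ε)) * ‖σ - σl‖ ^ 2
          - (1 / (1 - ε)) * ‖σl - σl1‖ ^ 2 + (ε⁻¹ / (1 - ε)) * Cqo * Δd) ∧
      (‖σ - σl1‖ ^ 2 ≤ (1 / (1 - ε)) * ‖σ - σl‖ ^ 2
          - ‖σl - σl1‖ ^ 2 + (ε⁻¹ / (1 - ε)) * Cqo * Δd) := by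
  intro ε hε hε1
  have h1ε : 0 < 1 - ε := by linarith
  set a := ‖σ - σl1‖ with ha
  set b := ‖σl - σl1‖ with hb
  set s := Real.sqrt (Cqo * Δd) with hs
  have hsnn : 0 ≤ s := Real.sqrt_nonneg _
  have hs2 : s ^ 2 = Cqo * Δd := Real.sq_sqrt (by positivity)
  have hid : ‖σ - σl‖ ^ 2 = a ^ 2 + b ^ 2 - 2 * ⟪σ - σl1, σl - σl1⟫ := by
    have : σ - σl = (σ - σl1) - (σl - σl1) := by abel
    rw [this, ha, hb, ← real_inner_self_eq_norm_sq, ← real_inner_self_eq_norm_sq,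
      ← real_inner_self_eq_norm_sq, inner_sub_sub_self, real_inner_comm (σl - σl1)]
    ring
  have hyoung : 2 * (a * s) ≤ ε * a ^ 2 + ε⁻¹ * s ^ 2 := by
    have hse : Real.sqrt ε ^ 2 = ε := Real.sq_sqrt hε.le
    have hsp : 0 < Real.sqrt ε := Real.sqrt_pos.mpr hε
    have h := two_mul_le_add_sq (Real.sqrt ε * a) (s / Real.sqrt ε)
    have e1 : Real.sqrt ε * a * (s / Real.sqrt ε) = a * s := by
      field_simp
    have e2 : (Real.sqrt ε * a) ^ 2 = ε * a ^ 2 := by rw [mul_pow, hse]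
    have e3 : (s / Real.sqrt ε) ^ 2 = ε⁻¹ * s ^ 2 := by
      rw [div_pow, hse, div_eq_inv_mul]
    rw [e2, e3] at h
    nlinarith [e1, h]
  have hεinv : 0 < ε⁻¹ := by positivity
  have hs2' : ε⁻¹ * s ^ 2 = ε⁻¹ * (Cqo * Δd) := by rw [hs2]
  have hkey : (1 - ε) * a ^ 2 ≤ ‖σ - σl‖ ^ 2 - b ^ 2 + ε⁻¹ * (Cqo * Δd) := by
    linarith [hid, hcross, hyoung, hs2']
  have hfirst : a ^ 2 ≤ (1 / (1 - ε)) * ‖σ - σl‖ ^ 2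
      - (1 / (1 - ε)) * b ^ 2 + (ε⁻¹ / (1 - ε)) * Cqo * Δd := by
    rw [show (1 / (1 - ε)) * ‖σ - σl‖ ^ 2 - (1 / (1 - ε)) * b ^ 2
        + (ε⁻¹ / (1 - ε)) * Cqo * Δd
        = (‖σ - σl‖ ^ 2 - b ^ 2 + ε⁻¹ * (Cqo * Δd)) / (1 - ε) from by
          field_simp, le_div_iff₀ h1ε]
    nlinarith [hkey]
  refine ⟨hfirst, ?_⟩
  have hge : b ^ 2 ≤ (1 / (1 - ε)) * b ^ 2 := by
    have : (1:ℝ) ≤ 1 / (1 - ε) := by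
      rw [le_div_iff₀ h1ε]; linarith
    nlinarith [sq_nonneg b]
  linarith
end

section
/- Let (E_ℓ)_{ℓ≥0}, (e_ℓ)_{ℓ≥0}, (Δ_ℓ)_{ℓ≥0} be sequences of nonnegative reals satisfying: (i) E_{ℓ+1} ≤ α₁ E_ℓ + C Δ_ℓ for some α₁ ∈ (0,1), C ≥ 1; (ii) e_{ℓ+1} = e_ℓ − Δ_ℓ; (iii) e_ℓ ≤ E_ℓ for all ℓ. Then there exists γ ∈ (0,1) and a constant K (depending on α₁, C, E₀, e₀) such that E_ℓ + C e_ℓ ≤ K γ^ℓ for all ℓ. In fact one may take any α₂ with (1−α₁)/(1+C) ≤ α₂ < (1−α₁)/C and γ = α₁ + C α₂. -/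
/-- Abstract contraction: if `E_{ℓ+1} ≤ α₁ E_ℓ + C Δ_ℓ`, `e_{ℓ+1} = e_ℓ - Δ_ℓ`
and `e_ℓ ≤ E_ℓ`, then `E_ℓ + C e_ℓ` decays geometrically. -/
theorem abstract_contraction (E e Δ : ℕ → ℝ) (α₁ C : ℝ)
    (hE : ∀ ℓ, 0 ≤ E ℓ) (he : ∀ ℓ, 0 ≤ e ℓ) (hΔ : ∀ ℓ, 0 ≤ Δ ℓ)
    (hα0 : 0 < α₁) (hα1 : α₁ < 1) (hC : 1 ≤ C)
    (h1 : ∀ ℓ, E (ℓ + 1) ≤ α₁ * E ℓ + C * Δ ℓ)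
    (h2 : ∀ ℓ, e (ℓ + 1) = e ℓ - Δ ℓ)
    (h3 : ∀ ℓ, e ℓ ≤ E ℓ) :
    ∃ γ : ℝ, 0 < γ ∧ γ < 1 ∧
      ∃ K : ℝ, ∀ ℓ, E ℓ + C * e ℓ ≤ K * γ ^ ℓ := by
  have hCpos : (0:ℝ) < C := lt_of_lt_of_le one_pos hC
  have hC1 : (0:ℝ) < C + 1 := by linarith
  set γ : ℝ := (C + α₁) / (C + 1) with hγdef
  have hγ0 : 0 < γ := div_pos (by linarith) hC1
  have hγ1 : γ < 1 := (div_lt_one hC1).mpr (by linarith)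
  refine ⟨γ, hγ0, hγ1, E 0 + C * e 0, ?_⟩
  intro ℓ
  induction ℓ with
  | zero => simp
  | succ n ih =>
    have step : E (n + 1) + C * e (n + 1) ≤ γ * (E n + C * e n) := by
      have h2' := h2 n
      have h1' := h1 n
      have h3' := h3 n
      have key : γ * (E n + C * e n) - (α₁ * E n + C * e n)
          = (C * (1 - α₁) / (C + 1)) * (E n - e n) := by
        rw [hγdef]; field_simp; ring
      have hnn : 0 ≤ (C * (1 - α₁) / (C + 1)) * (E n - e n) :=
        mul_nonneg (div_nonneg (mul_nonneg hCpos.le (by linarith)) hC1.le) (by linarith)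
      nlinarith [hΔ n]
    calc E (n + 1) + C * e (n + 1) ≤ γ * (E n + C * e n) := step
      _ ≤ γ * ((E 0 + C * e 0) * γ ^ n) := by
          exact mul_le_mul_of_nonneg_left ih hγ0.le
      _ = (E 0 + C * e 0) * γ ^ (n + 1) := by ring
end

section
/- Let (W,d) be a closed Hilbert complex with Poincaré constant c_P, and let V_h ⊆ V be a finite-dimensional subcomplex with a V-bounded cochain projection π_h. Then the discrete dual Poincaré inequality holds: for every v_h ∈ (Z_h)^{*⊥} = B_h (the range of d restricted to V_h^{k-1}), ‖v_h‖ ≤ c_P ‖π_h‖_V ‖d*_h v_h‖, where d*_h is the adjoint of d : V_h^{k-1} → V_h^k with respect to the W-inner product. -/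
open scoped RealInnerProductSpace

/-- Discrete dual Poincaré inequality: from the discrete Poincaré inequality
`‖w‖ ≤ c_P ‖π_h‖ ‖dw‖` on the orthogonal complement of the discrete kernel,
one gets `‖v_h‖ ≤ c_P ‖π_h‖ ‖d*_h v_h‖` for all `v_h ∈ B_h = d(V_h^{k-1})`. -/
theorem discrete_dual_poincare {W1 W2 : Type*}
    [NormedAddCommGroup W1] [InnerProductSpace ℝ W1]
    [NormedAddCommGroup W2] [InnerProductSpace ℝ W2]
    (Vh1 : Submodule ℝ W1) (Vh2 : Submodule ℝ W2)
    [FiniteDimensional ℝ ↥Vh1] [FiniteDimensional ℝ ↥Vh2]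
    (d : W1 →ₗ[ℝ] W2) (hd : ∀ v ∈ Vh1, d v ∈ Vh2)
    (Dstar : W2 →ₗ[ℝ] W1)
    (hD : ∀ u ∈ Vh2, ∀ v ∈ Vh1, ⟪Dstar u, v⟫ = ⟪u, d v⟫)
    (cP normπ : ℝ) (hcP : 0 < cP) (hπ : 0 < normπ)
    (hPoincare : ∀ w ∈ Vh1, (∀ z ∈ Vh1, d z = 0 → ⟪w, z⟫ = 0) →
      ‖w‖ ≤ cP * normπ * ‖d w‖) :
    ∀ v : W2, (∃ w ∈ Vh1, d w = v) → ‖v‖ ≤ cP * normπ * ‖Dstar v‖ := by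
  rintro v ⟨w, hw, rfl⟩
  -- kernel of d restricted to Vh1, as a submodule of ↥Vh1
  set K : Submodule ℝ ↥Vh1 := LinearMap.ker (d.comp Vh1.subtype) with hK
  obtain ⟨p, hp, q, hq, hpq⟩ := Submodule.exists_add_mem_mem_orthogonal (K := K) ⟨w, hw⟩
  have hdq : d (q : W1) = d w := by
    have h1 : d (p : W1) = 0 := by
      simpa [hK, LinearMap.mem_ker] using hp
    have : (p : W1) + (q : W1) = w := congrArg Subtype.val hpq.symm
    calc d (q : W1) = d ((p : W1) + (q : W1)) - d (p : W1) := by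
          rw [map_add]; abel
      _ = d w := by rw [this, h1, sub_zero]
  -- q is orthogonal to the kernel
  have horth : ∀ z ∈ Vh1, d z = 0 → ⟪(q : W1), z⟫ = 0 := by
    intro z hz hdz
    have hzK : (⟨z, hz⟩ : ↥Vh1) ∈ K := by
      simpa [hK, LinearMap.mem_ker] using hdz
    have := hq ⟨z, hz⟩ hzK
    simpa [real_inner_comm] using this
  have hqn : ‖(q : W1)‖ ≤ cP * normπ * ‖d (q : W1)‖ :=
    hPoincare (q : W1) q.2 horth
  -- key identity : ‖d w‖² = ⟪Dstar (d w), q⟫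
  have hmem2 : d w ∈ Vh2 := hd w hw
  have hkey : ⟪d w, d w⟫ = ⟪Dstar (d w), (q : W1)⟫ := by
    rw [hD (d w) hmem2 (q : W1) q.2, hdq]
  have hsq : ‖d w‖ ^ 2 ≤ ‖Dstar (d w)‖ * (cP * normπ * ‖d w‖) := by
    have h1 : ‖d w‖ ^ 2 = ⟪d w, d w⟫ := by
      rw [real_inner_self_eq_norm_sq]
    rw [h1, hkey]
    calc ⟪Dstar (d w), (q : W1)⟫ ≤ ‖Dstar (d w)‖ * ‖(q : W1)‖ :=
          real_inner_le_norm _ _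
      _ ≤ ‖Dstar (d w)‖ * (cP * normπ * ‖d w‖) := by
          have := hqn
          rw [hdq] at this
          exact mul_le_mul_of_nonneg_left this (norm_nonneg _)
  rcases eq_or_lt_of_le (norm_nonneg (d w)) with h0 | h0
  · rw [← h0]
    positivity
  · have : ‖d w‖ * ‖d w‖ ≤ (cP * normπ * ‖Dstar (d w)‖) * ‖d w‖ := by
      nlinarith [hsq]
    exact le_of_mul_le_mul_right this h0
end

section
/- Let H_h, H_H be the discrete harmonic spaces of two nested subcomplexes V_H ⊆ V_h of a Hilbert complex, and let π_H be a cochain projection onto V_H. For q ∈ H_H ⊆ Z_h = B_h ⊕ H_h, one has q − P_{H_h} q ∈ B_h, hence π_H(q − P_{H_h} q) ∈ B_H ⊆ B_h, and therefore π_H(q − P_{H_h} q) ⊥ (q − P_{H_h} q); consequently ‖q − P_{H_h} q‖ ≤ ‖(id − π_H) P_{H_h} q‖. -/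
open scoped RealInnerProductSpace

/-- Key estimate in the gap lemma for nested discretizations: for
`q ∈ H_H ⊆ Z_h = B_h ⊕ H_h`, the component `q - P_{H_h} q` lies in `B_h`,
`π_H (q - P_{H_h} q) ∈ B_H` is orthogonal to `q - P_{H_h} q`, and hence
`‖q - P_{H_h} q‖ ≤ ‖(id - π_H)(P_{H_h} q)‖`. -/
theorem nested_gap_estimate {W : Type*}
    [NormedAddCommGroup W] [InnerProductSpace ℝ W]
    (Bh Hh BH HH : Submodule ℝ W) [CompleteSpace ↥Hh]
    (πH : W →ₗ[ℝ] W)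
    (hBHBh : BH ≤ Bh)
    (hsub : HH ≤ Bh ⊔ Hh)
    (horth : ∀ b ∈ Bh, ∀ h ∈ Hh, ⟪b, h⟫ = 0)
    (hπB : ∀ x ∈ Bh, πH x ∈ BH)
    (hπfix : ∀ x ∈ HH, πH x = x)
    (hHHBH : ∀ x ∈ HH, ∀ b ∈ BH, ⟪x, b⟫ = 0)
    (q : W) (hq : q ∈ HH) :
    (q - (Submodule.orthogonalProjectionOnto Hh q : W) ∈ Bh) ∧
    (πH (q - (Submodule.orthogonalProjectionOnto Hh q : W)) ∈ BH) ∧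
    (⟪πH (q - (Submodule.orthogonalProjectionOnto Hh q : W)),
        q - (Submodule.orthogonalProjectionOnto Hh q : W)⟫ = 0) ∧
    ‖q - (Submodule.orthogonalProjectionOnto Hh q : W)‖
      ≤ ‖(Submodule.orthogonalProjectionOnto Hh q : W) - πH (Submodule.orthogonalProjectionOnto Hh q : W)‖ := by
  -- decompose q = b + h
  obtain ⟨b, hb, h, hh, hbh⟩ := Submodule.mem_sup.mp (hsub hq)
  -- the orthogonal projection of q onto Hh is h
  have hproj : (Submodule.orthogonalProjectionOnto Hh q : W) = h := by
    apply Submodule.eq_starProjection_of_mem_of_inner_eq_zero hh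
    intro w hw
    have : q - h = b := by rw [← hbh]; abel
    rw [this]
    exact horth b hb w hw
  rw [hproj]
  have hqb : q - h = b := by rw [← hbh]; abel
  rw [hqb]
  -- orthogonality: ⟪πH b, b⟫ = 0
  have hπbBH : πH b ∈ BH := hπB b hb
  have h1 : ⟪q, πH b⟫ = 0 := hHHBH q hq _ hπbBH
  have h2 : ⟪πH b, h⟫ = 0 := horth _ (hBHBh hπbBH) h hh
  have key : ⟪πH b, b⟫ = 0 := by
    have : ⟪πH b, b⟫ = ⟪πH b, q⟫ - ⟪πH b, h⟫ := by
      rw [← inner_sub_right, hqb]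
    rw [this, h2, real_inner_comm, h1, sub_zero]
  refine ⟨hb, hπB b hb, key, ?_⟩
  -- the norm estimate
  have hfix : πH q = q := hπfix q hq
  have key' : ⟪b, πH b⟫ = 0 := by rw [real_inner_comm]; exact key
  have hcalc : ⟪b, b⟫ = ⟪b, πH h - h⟫ := by
    have heq : b - πH b = πH h - h := by
      have := congrArg πH hqb
      rw [map_sub, hfix] at this
      -- this : πH q - πH h = πH b
      have hb' : πH b = q - πH h := this.symm
      rw [hb', ← hqb]; abel
    calc ⟪b, b⟫ = ⟪b, b - πH b⟫ := by
          rw [inner_sub_right, key', sub_zero]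
      _ = ⟪b, πH h - h⟫ := by rw [heq]
  have hcs : ⟪b, πH h - h⟫ ≤ ‖b‖ * ‖πH h - h‖ := real_inner_le_norm _ _
  have hsq : ‖b‖ * ‖b‖ ≤ ‖b‖ * ‖h - πH h‖ := by
    rw [← real_inner_self_eq_norm_mul_norm, hcalc, ← norm_sub_rev (πH h) h]; exact hcs
  rcases eq_or_ne b 0 with rfl | hne
  · simp
  · exact le_of_mul_le_mul_left hsq (norm_pos_iff.mpr hne)
end
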